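/- Existence and uniqueness for the initial value problem (Theorem 2.3): Assume Hypothesis (H). If g ∈ L¹_loc((a,b); r dx), z ∈ ℂ, c ∈ (a,b), and α, β ∈ ℂ, then there is a unique function f ∈ 𝔇_τ (i.e., f and f^[1] are locally absolutely continuous on (a,b)) satisfying (τ − z)f = g a.e. on (a,b), f(c) = α, and f^[1](c) = β. If, in addition, g, α, β, and z are real-valued, then the solution f is real-valued. -/

import Mathlib

open MeasureTheory Set Filter intervalIntegral

noncomputable section

/-- The open interval of real numbers determined by extended-real endpoints `a`, `b`. -/
def EI (a b : EReal) : Set ℝ := {x : ℝ | a < (x : EReal) ∧ (x : EReal) < b}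

/-- Hypothesis (H): `p, q, r, s` are real-valued measurable on `(a,b)`, `p > 0` and `r > 0`
a.e. on `(a,b)`, and `1/p, q, r, s ∈ L¹_loc((a,b); dx)`. -/
structure SLH (a b : EReal) (p q r s : ℝ → ℝ) : Prop where
  hab : a < b
  measp : Measurable p
  measq : Measurable q
  measr : Measurable r
  meass : Measurable s
  ppos : ∀ᵐ x ∂(volume : Measure ℝ), x ∈ EI a b → 0 < p x
  rpos : ∀ᵐ x ∂(volume : Measure ℝ), x ∈ EI a b → 0 < r x
  invp_loc : LocallyIntegrableOn (fun x => 1 / p x) (EI a b) volume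
  q_loc : LocallyIntegrableOn q (EI a b) volume
  r_loc : LocallyIntegrableOn r (EI a b) volume
  s_loc : LocallyIntegrableOn s (EI a b) volume

/-- `f` is locally absolutely continuous on the interval `I` with a.e. derivative `fd`. -/
def HasAEDerivOn (I : Set ℝ) (f fd : ℝ → ℝ) : Prop :=
  ∀ x ∈ I, ∀ y ∈ I,
    IntervalIntegrable fd volume x y ∧ f y - f x = ∫ t in x..y, fd t

/-- `f ∈ 𝔇_τ(I)`: `f` is locally AC on `I` with a.e. derivative `fd`, the first
quasi-derivative `f1 = p (f' + s f)` (a.e.) is locally AC with a.e. derivative `f1d`. -/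
def InDomTau (I : Set ℝ) (p s : ℝ → ℝ) (f fd f1 f1d : ℝ → ℝ) : Prop :=
  HasAEDerivOn I f fd ∧
    (∀ᵐ t ∂(volume : Measure ℝ), t ∈ I → f1 t = p t * (fd t + s t * f t)) ∧
    HasAEDerivOn I f1 f1d

/-- The differential expression `τ f = (1/r) (−(f^[1])′ + s f^[1] + q f)`. -/
def tauApp (q r s : ℝ → ℝ) (f f1 f1d : ℝ → ℝ) (t : ℝ) : ℝ :=
  (1 / r t) * (-f1d t + s t * f1 t + q t * f t)

/-- `u` (with data `ud, u1, u1d`) is a real solution of `(τ - lam) u = 0` on `I`. -/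
def IsSolutionWith (I : Set ℝ) (p q r s : ℝ → ℝ) (lam : ℝ) (u ud u1 u1d : ℝ → ℝ) : Prop :=
  InDomTau I p s u ud u1 u1d ∧
    ∀ᵐ t ∂(volume : Measure ℝ), t ∈ I → tauApp q r s u u1 u1d t = lam * u t

/-- `u` is a real solution of `(τ - lam) u = 0` on `I`. -/
def IsSolution (I : Set ℝ) (p q r s : ℝ → ℝ) (lam : ℝ) (u : ℝ → ℝ) : Prop :=
  ∃ ud u1 u1d, IsSolutionWith I p q r s lam u ud u1 u1d

/-- Complex version: loc AC with a.e. derivative. -/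
def HasAEDerivOnC (I : Set ℝ) (f fd : ℝ → ℂ) : Prop :=
  ∀ x ∈ I, ∀ y ∈ I,
    IntervalIntegrable fd volume x y ∧ f y - f x = ∫ t in x..y, fd t

/-- Complex version of `InDomTau`. -/
def InDomTauC (I : Set ℝ) (p s : ℝ → ℝ) (f fd f1 f1d : ℝ → ℂ) : Prop :=
  HasAEDerivOnC I f fd ∧
    (∀ᵐ t ∂(volume : Measure ℝ), t ∈ I → f1 t = (p t : ℂ) * (fd t + (s t : ℂ) * f t)) ∧
    HasAEDerivOnC I f1 f1d

/-- Complex version of `τ`. -/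
def tauAppC (q r s : ℝ → ℝ) (f f1 f1d : ℝ → ℂ) (t : ℝ) : ℂ :=
  (1 / (r t : ℂ)) * (-f1d t + (s t : ℂ) * f1 t + (q t : ℂ) * f t)

/-- `u` (with data) is a complex solution of `(τ - z) u = 0` on `I`. -/
def IsSolutionWithC (I : Set ℝ) (p q r s : ℝ → ℝ) (z : ℂ) (u ud u1 u1d : ℝ → ℂ) : Prop :=
  InDomTauC I p s u ud u1 u1d ∧
    ∀ᵐ t ∂(volume : Measure ℝ), t ∈ I → tauAppC q r s u u1 u1d t = z * u t

/-- `u` does not vanish identically on `I`. -/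
def NontrivOn (I : Set ℝ) (u : ℝ → ℝ) : Prop := ∃ x ∈ I, u x ≠ 0

/-- Linear independence of two real functions on `I`. -/
def LinIndepOn (I : Set ℝ) (u v : ℝ → ℝ) : Prop :=
  ∀ c₁ c₂ : ℝ, (∀ x ∈ I, c₁ * u x + c₂ * v x = 0) → c₁ = 0 ∧ c₂ = 0

/-- `τ - lam` is disconjugate on `I`: every nontrivial real solution has at most one zero. -/
def Disconjugate (I : Set ℝ) (p q r s : ℝ → ℝ) (lam : ℝ) : Prop :=
  ∀ u : ℝ → ℝ, IsSolution I p q r s lam u → NontrivOn I u →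
    ∀ x ∈ I, ∀ y ∈ I, u x = 0 → u y = 0 → x = y

/-- `f` has compact support contained in `I`. -/
def SuppIn (I : Set ℝ) (f : ℝ → ℂ) : Prop :=
  ∃ K : Set ℝ, IsCompact K ∧ K ⊆ I ∧ ∀ x ∈ I \ K, f x = 0

/-- Membership (with derivative data) in the domain of the pre-minimal operator `Ṫ`. -/
def InDomPreMin (a b : EReal) (p q r s : ℝ → ℝ) (f fd f1 f1d : ℝ → ℂ) : Prop :=
  InDomTauC (EI a b) p s f fd f1 f1d ∧ SuppIn (EI a b) f ∧
    IntegrableOn (fun x => r x * ‖f x‖ ^ 2) (EI a b) volume ∧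
    IntegrableOn (fun x => r x * ‖tauAppC q r s f f1 f1d x‖ ^ 2) (EI a b) volume

/-- `(f, Ṫ f) ≥ lam0 ‖f‖²` for all `f ∈ dom(Ṫ)`. -/
def PreMinLowerBound (a b : EReal) (p q r s : ℝ → ℝ) (lam0 : ℝ) : Prop :=
  ∀ f fd f1 f1d : ℝ → ℂ, InDomPreMin a b p q r s f fd f1 f1d →
    lam0 * (∫ x in EI a b, r x * ‖f x‖ ^ 2) ≤
      (∫ x in EI a b, (r x : ℂ) * (starRingEnd ℂ (f x) * tauAppC q r s f f1 f1d x)).re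

/-- Membership (with derivative data) in the domain of the maximal operator `T_max`. -/
def InDomMax (a b : EReal) (p q r s : ℝ → ℝ) (g gd g1 g1d : ℝ → ℂ) : Prop :=
  InDomTauC (EI a b) p s g gd g1 g1d ∧
    IntegrableOn (fun x => r x * ‖g x‖ ^ 2) (EI a b) volume ∧
    IntegrableOn (fun x => r x * ‖tauAppC q r s g g1 g1d x‖ ^ 2) (EI a b) volume

/-- `τ - lam` is oscillatory at `b`: some nontrivial real solution has zeros accumulating at `b`. -/
def OscillatoryAtB (a b : EReal) (p q r s : ℝ → ℝ) (lam : ℝ) : Prop :=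
  ∃ u : ℝ → ℝ, IsSolution (EI a b) p q r s lam u ∧ NontrivOn (EI a b) u ∧
    ∀ c ∈ EI a b, ∃ x ∈ EI a b, c < x ∧ u x = 0

/-- `τ - lam` is oscillatory at `a`. -/
def OscillatoryAtA (a b : EReal) (p q r s : ℝ → ℝ) (lam : ℝ) : Prop :=
  ∃ u : ℝ → ℝ, IsSolution (EI a b) p q r s lam u ∧ NontrivOn (EI a b) u ∧
    ∀ c ∈ EI a b, ∃ x ∈ EI a b, x < c ∧ u x = 0

/-- The filter of real numbers tending to the endpoint `a` from the right. -/
def atEndA (a : EReal) : Filter ℝ :=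
  Filter.comap (fun x : ℝ => (x : EReal)) (nhdsWithin a (Set.Ioi a))

/-- The filter of real numbers tending to the endpoint `b` from the left. -/
def atEndB (b : EReal) : Filter ℝ :=
  Filter.comap (fun x : ℝ => (x : EReal)) (nhdsWithin b (Set.Iio b))

/-- `u` lies in `L²((a,b); r dx)` near `b`. -/
def L2NearB (a b : EReal) (r : ℝ → ℝ) (u : ℝ → ℂ) : Prop :=
  ∀ c ∈ EI a b, IntegrableOn (fun x => r x * ‖u x‖ ^ 2) (EI (c : EReal) b) volume

/-- `u` lies in `L²((a,b); r dx)` near `a`. -/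
def L2NearA (a b : EReal) (r : ℝ → ℝ) (u : ℝ → ℂ) : Prop :=
  ∀ c ∈ EI a b, IntegrableOn (fun x => r x * ‖u x‖ ^ 2) (EI a (c : EReal)) volume

/-- `τ` is in the limit circle case at `b`. -/
def LimitCircleAtB (a b : EReal) (p q r s : ℝ → ℝ) : Prop :=
  ∀ z : ℂ, ∀ u ud u1 u1d : ℝ → ℂ,
    IsSolutionWithC (EI a b) p q r s z u ud u1 u1d → L2NearB a b r u

/-- `τ` is in the limit circle case at `a`. -/
def LimitCircleAtA (a b : EReal) (p q r s : ℝ → ℝ) : Prop :=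
  ∀ z : ℂ, ∀ u ud u1 u1d : ℝ → ℂ,
    IsSolutionWithC (EI a b) p q r s z u ud u1 u1d → L2NearA a b r u

/-- `u` is a principal solution of `(τ - lam) u = 0` at `b` on the interval `I`. -/
def PrincipalAtB (I : Set ℝ) (b : EReal) (p q r s : ℝ → ℝ) (lam : ℝ) (u : ℝ → ℝ) : Prop :=
  IsSolution I p q r s lam u ∧ NontrivOn I u ∧
    ∀ v : ℝ → ℝ, IsSolution I p q r s lam v → LinIndepOn I u v →
      Tendsto (fun x => u x / v x) (atEndB b) (nhds 0)

/-- `u` is a principal solution of `(τ - lam) u = 0` at `a` on the interval `I`. -/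
def PrincipalAtA (I : Set ℝ) (a : EReal) (p q r s : ℝ → ℝ) (lam : ℝ) (u : ℝ → ℝ) : Prop :=
  IsSolution I p q r s lam u ∧ NontrivOn I u ∧
    ∀ v : ℝ → ℝ, IsSolution I p q r s lam v → LinIndepOn I u v →
      Tendsto (fun x => u x / v x) (atEndA a) (nhds 0)

/-- `v` is a nonprincipal solution of `(τ - lam) u = 0` at `b` on the interval `I`. -/
def NonprincipalAtB (I : Set ℝ) (b : EReal) (p q r s : ℝ → ℝ) (lam : ℝ) (v : ℝ → ℝ) : Prop :=
  IsSolution I p q r s lam v ∧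
    ∃ u : ℝ → ℝ, PrincipalAtB I b p q r s lam u ∧ LinIndepOn I u v

end

/-! Writing `u = (f, f^[1])`, the problem `(τ - z) f = g`, `f(c) = α`, `f^[1](c) = β` is
equivalent to the linear Volterra equation `u(x) = (α, β) + ∫_c^x (A(t) u(t) + h(t)) dt` whose
coefficients `A`, `h` are only locally integrable. On a compact interval `J ∋ c` the `n`-th
iterate of its Picard operator is Lipschitz with constant `(∫_J ‖A‖)^n / n!`, because the
absolutely continuous primitive `M` of `‖A‖` satisfies `∫ ‖A‖ M^n = M^(n+1) / (n+1)`. Hence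
some iterate is a contraction and there is exactly one continuous solution on `J`; the
solutions on the intervals `[c, d]`, `d ∈ (a, b)`, glue by uniqueness. If the
data are real, the complex conjugate of the solution solves the same problem, so by uniqueness
the solution is real. -/

open Function ODE
open scoped Nat

theorem integral_mul_primitive_pow {m : ℝ → ℝ} {c x : ℝ} (hm : IntervalIntegrable m volume c x)
    (n : ℕ) :
    ∫ t in c..x, m t * (∫ s in c..t, m s) ^ n = (∫ s in c..x, m s) ^ (n + 1) / (n + 1) := by
  set M : ℝ → ℝ := fun y ↦ ∫ s in c..y, m s
  have hM : AbsolutelyContinuousOnInterval M c x :=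
    hm.absolutelyContinuousOnInterval_intervalIntegral left_mem_uIcc
  have hMpow : ∀ k : ℕ, AbsolutelyContinuousOnInterval (fun y ↦ M y ^ (k + 1)) c x := by
    intro k
    induction k with
    | zero => simpa using hM
    | succ k ih => simpa [pow_succ] using ih.fun_mul hM
  have hderiv : ∀ᵐ t, t ∈ uIoc c x →
      deriv (fun y ↦ M y ^ (n + 1)) t = (n + 1) * (m t * M t ^ n) := by
    filter_upwards [hm.ae_hasDerivAt_integral] with t ht htI
    have := ((ht (uIoc_subset_uIcc htI) c left_mem_uIcc).pow (n + 1)).deriv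
    rw [show (fun y ↦ M y ^ (n + 1)) = M ^ (n + 1) from rfl, this, Nat.add_sub_cancel]
    push_cast
    ring
  have hFTC := (hMpow n).integral_deriv_eq_sub
  rw [integral_congr_ae hderiv, intervalIntegral.integral_const_mul] at hFTC
  simp only [M, integral_same, zero_pow n.succ_ne_zero, sub_zero] at hFTC
  rw [eq_div_iff (by positivity), mul_comm, hFTC]

theorem abs_integral_mul_abs_primitive_pow {m : ℝ → ℝ} {c x : ℝ} (hm0 : ∀ t, 0 ≤ m t)
    (hm : IntervalIntegrable m volume c x) (n : ℕ) :
    |∫ t in c..x, m t * |∫ s in c..t, m s| ^ n| = |∫ s in c..x, m s| ^ (n + 1) / (n + 1) := by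
  obtain ⟨σ, hσ, hσM⟩ : ∃ σ : ℝ, |σ| = 1 ∧
      ∀ t ∈ uIcc c x, |∫ s in c..t, m s| = σ * ∫ s in c..t, m s := by
    rcases le_total c x with hcx | hxc
    · refine ⟨1, abs_one, fun t ht ↦ ?_⟩
      rw [uIcc_of_le hcx] at ht
      rw [one_mul, abs_of_nonneg (integral_nonneg ht.1 fun s _ ↦ hm0 s)]
    · refine ⟨-1, by simp, fun t ht ↦ ?_⟩
      rw [uIcc_of_ge hxc] at ht
      rw [integral_symm, abs_neg, abs_of_nonneg (integral_nonneg ht.2 fun s _ ↦ hm0 s)]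
      ring
  calc |∫ t in c..x, m t * |∫ s in c..t, m s| ^ n|
      = |σ ^ n * ∫ t in c..x, m t * (∫ s in c..t, m s) ^ n| := by
        rw [← intervalIntegral.integral_const_mul]
        congr 1
        refine integral_congr fun t ht ↦ ?_
        simp only [hσM t ht, mul_pow]; ring
    _ = |∫ s in c..x, m s| ^ (n + 1) / (n + 1) := by
        rw [abs_mul, abs_pow, hσ, one_pow, one_mul, integral_mul_primitive_pow hm, abs_div,
          abs_pow, abs_of_pos (by positivity : (0:ℝ) < n + 1)]

section LinearIntegralEquation

variable {E : Type*} [NormedAddCommGroup E] [NormedSpace ℝ E] {A : ℝ → E →L[ℝ] E} {h : ℝ → E}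

theorem integrableOn_clm_apply_add {J : Set ℝ} (hJ : IsCompact J) (hA : IntegrableOn A J)
    (hh : IntegrableOn h J) {u : ℝ → E} (hu : ContinuousOn u J) :
    IntegrableOn (fun t ↦ A t (u t) + h t) J := by
  obtain ⟨C, hC⟩ := hJ.exists_bound_of_continuousOn hu
  refine Integrable.add ((hA.norm.mul_const C).mono' ?_ ?_) hh
  · exact (ContinuousLinearMap.id ℝ _).aestronglyMeasurable_comp₂ hA.aestronglyMeasurable
      (hu.aestronglyMeasurable hJ.measurableSet)
  · rw [ae_restrict_iff' hJ.measurableSet]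
    exact .of_forall fun t ht ↦ (A t).le_opNorm_of_le (hC t ht)

theorem picard_eq_of_eqOn {f : ℝ → E → E} {c x : ℝ} {ξ : E} {u v : ℝ → E}
    (huv : EqOn u v (uIcc c x)) : picard f c ξ u x = picard f c ξ v x := by
  simp only [picard_apply]
  rw [integral_congr fun t ht ↦ by rw [huv ht]]

variable {a b c : ℝ}

theorem continuousOn_picard_Icc (hc : c ∈ Icc a b) (hA : IntegrableOn A (Icc a b))
    (hh : IntegrableOn h (Icc a b)) (ξ : E) {u : ℝ → E} (hu : ContinuousOn u (Icc a b)) :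
    ContinuousOn (picard (fun t v ↦ A t v + h t) c ξ u) (Icc a b) := by
  have hab : a ≤ b := hc.1.trans hc.2
  have hint := integrableOn_clm_apply_add isCompact_Icc hA hh hu
  rw [← uIcc_of_le hab] at hint hc ⊢
  exact continuousOn_const.add (continuousOn_primitive_interval' hint.intervalIntegrable hc)

noncomputable def picardIcc (hc : c ∈ Icc a b) (hA : IntegrableOn A (Icc a b))
    (hh : IntegrableOn h (Icc a b)) (ξ : E) (v : C(Icc a b, E)) : C(Icc a b, E) :=
  ⟨(Icc a b).domRestrict (picard (fun t v ↦ A t v + h t) c ξ (IccExtend (hc.1.trans hc.2) v)),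
    (continuousOn_picard_Icc hc hA hh ξ (v.continuous.Icc_extend').continuousOn).domRestrict⟩

theorem norm_picardIcc_iterate_sub_le (hc : c ∈ Icc a b) (hA : IntegrableOn A (Icc a b))
    (hh : IntegrableOn h (Icc a b)) (ξ : E) (v w : C(Icc a b, E)) (n : ℕ) (x : Icc a b) :
    ‖(picardIcc hc hA hh ξ)^[n] v x - (picardIcc hc hA hh ξ)^[n] w x‖ ≤
      |∫ t in c..x, ‖A t‖| ^ n / n ! * dist v w := by
  induction n generalizing x with
  | zero => simpa [← dist_eq_norm] using ContinuousMap.dist_apply_le_dist x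
  | succ n ih =>
    set P := picardIcc hc hA hh ξ
    have hab : a ≤ b := hc.1.trans hc.2
    have hsub : uIcc c x ⊆ Icc a b := ordConnected_Icc.uIcc_subset hc x.2
    have hint : ∀ u : C(Icc a b, E),
        IntervalIntegrable (fun t ↦ A t (IccExtend hab u t) + h t) volume c x := fun u ↦
      ((integrableOn_clm_apply_add isCompact_Icc hA hh
        u.continuous.Icc_extend'.continuousOn).mono_set hsub).intervalIntegrable
    have hAint : IntervalIntegrable (fun t ↦ ‖A t‖) volume c x :=
      IntegrableOn.intervalIntegrable (hA.mono_set hsub).norm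
    have hM : ContinuousOn (fun t ↦ |∫ s in c..t, ‖A s‖| ^ n / n ! * dist v w) (uIcc c x) :=
      (((continuousOn_primitive_interval' hAint left_mem_uIcc).abs.pow n).div_const _).mul_const _
    rw [iterate_succ_apply', iterate_succ_apply']
    simp only [P, picardIcc, ContinuousMap.coe_mk, domRestrict_apply, picard_apply]
    rw [add_sub_add_left_eq_sub, ← integral_sub (hint _) (hint _)]
    calc _ ≤ |∫ t in c..x, ‖A t‖ * (|∫ s in c..t, ‖A s‖| ^ n / n ! * dist v w)| := by
          refine norm_integral_le_abs_of_norm_le ?_ (hAint.mul_continuousOn hM)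
          rw [ae_restrict_iff' measurableSet_uIoc]
          refine .of_forall fun t ht ↦ ?_
          have htI : t ∈ Icc a b := hsub (uIoc_subset_uIcc ht)
          rw [add_sub_add_right_eq_sub, ← map_sub]
          refine (A t).le_opNorm_of_le ?_
          simpa only [IccExtend_of_mem hab _ htI] using ih ⟨t, htI⟩
      _ = |∫ t in c..x, ‖A t‖| ^ (n + 1) / (n + 1) ! * dist v w := by
          simp_rw [← mul_assoc, mul_div_assoc', div_mul_eq_mul_div, intervalIntegral.integral_div,
            intervalIntegral.integral_mul_const, abs_div, abs_mul,
            abs_integral_mul_abs_primitive_pow (fun _ ↦ norm_nonneg _) hAint, abs_dist,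
            Nat.abs_cast, Nat.factorial_succ]
          push_cast
          field_simp

theorem isFixedPt_picardIcc_iff (hc : c ∈ Icc a b) (hA : IntegrableOn A (Icc a b))
    (hh : IntegrableOn h (Icc a b)) (ξ : E) (v : C(Icc a b, E)) :
    IsFixedPt (picardIcc hc hA hh ξ) v ↔
      EqOn (IccExtend (hc.1.trans hc.2) v)
        (picard (fun t w ↦ A t w + h t) c ξ (IccExtend (hc.1.trans hc.2) v)) (Icc a b) := by
  refine ⟨fun hv x hx ↦ ?_, fun hv ↦ ContinuousMap.ext fun x ↦ ?_⟩
  · rw [IccExtend_of_mem _ _ hx]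
    exact (congrArg (· ⟨x, hx⟩) hv).symm
  · have := hv x.2
    rw [IccExtend_of_mem _ _ x.2] at this
    exact this.symm

theorem exists_contractingWith_iterate_picardIcc (hc : c ∈ Icc a b)
    (hA : IntegrableOn A (Icc a b)) (hh : IntegrableOn h (Icc a b)) (ξ : E) :
    ∃ (n : ℕ) (K : NNReal), ContractingWith K (picardIcc hc hA hh ξ)^[n] := by
  have hab : a ≤ b := hc.1.trans hc.2
  set L := |∫ t in a..b, ‖A t‖|
  obtain ⟨n, hn⟩ := (FloorSemiring.tendsto_pow_div_factorial_atTop L).eventually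
    (gt_mem_nhds zero_lt_one) |>.exists
  have hL : 0 ≤ L ^ n / n ! := by positivity
  refine ⟨n, ⟨L ^ n / n !, hL⟩, hn, LipschitzWith.of_dist_le_mul fun v w ↦ ?_⟩
  refine (ContinuousMap.dist_le (mul_nonneg hL dist_nonneg)).2 fun x ↦ ?_
  rw [dist_eq_norm]
  refine (norm_picardIcc_iterate_sub_le hc hA hh ξ v w n x).trans ?_
  change _ ≤ L ^ n / n ! * dist v w
  have hsub : uIcc c x ⊆ uIcc a b := by
    rw [uIcc_of_le hab]; exact ordConnected_Icc.uIcc_subset hc x.2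
  have hAint : IntervalIntegrable (fun t ↦ ‖A t‖) volume a b := by
    rw [← uIcc_of_le hab] at hA; exact IntegrableOn.intervalIntegrable hA.norm
  gcongr
  exact abs_integral_mono_interval (uIoc_subset_uIoc_of_uIcc_subset_uIcc hsub)
    (.of_forall fun _ ↦ norm_nonneg _) hAint

theorem eqOn_of_eqOn_picard_Icc (hc : c ∈ Icc a b) (hA : IntegrableOn A (Icc a b))
    (hh : IntegrableOn h (Icc a b)) {ξ : E} {u v : ℝ → E} (hu : ContinuousOn u (Icc a b))
    (hv : ContinuousOn v (Icc a b)) (hup : EqOn u (picard (fun t w ↦ A t w + h t) c ξ u) (Icc a b))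
    (hvp : EqOn v (picard (fun t w ↦ A t w + h t) c ξ v) (Icc a b)) :
    EqOn u v (Icc a b) := by
  have hab : a ≤ b := hc.1.trans hc.2
  have hfix : ∀ w : ℝ → E, (hw : ContinuousOn w (Icc a b)) →
      EqOn w (picard (fun t w ↦ A t w + h t) c ξ w) (Icc a b) →
      IsFixedPt (picardIcc hc hA hh ξ) ⟨(Icc a b).domRestrict w, hw.domRestrict⟩ := by
    intro w hw hwp
    set w₀ : C(Icc a b, E) := ⟨(Icc a b).domRestrict w, hw.domRestrict⟩
    have hext : EqOn (IccExtend hab w₀) w (Icc a b) := fun x hx ↦ IccExtend_of_mem hab _ hx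
    refine (isFixedPt_picardIcc_iff hc hA hh ξ _).2 fun x hx ↦ ?_
    rw [hext hx, picard_eq_of_eqOn (hext.mono (ordConnected_Icc.uIcc_subset hc hx))]
    exact hwp hx
  obtain ⟨n, K, hK⟩ := exists_contractingWith_iterate_picardIcc hc hA hh ξ
  intro x hx
  have := hK.fixedPoint_unique' ((hfix u hu hup).iterate n) ((hfix v hv hvp).iterate n)
  exact congrArg (· ⟨x, hx⟩) this

theorem eqOn_of_eqOn_picard {I : Set ℝ} (hI : OrdConnected I) (hc : c ∈ I)
    (hA : LocallyIntegrableOn A I) (hh : LocallyIntegrableOn h I) {ξ : E} {u v : ℝ → E}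
    (hu : ∀ d ∈ I, ContinuousOn u (uIcc c d)) (hv : ∀ d ∈ I, ContinuousOn v (uIcc c d))
    (hup : EqOn u (picard (fun t w ↦ A t w + h t) c ξ u) I)
    (hvp : EqOn v (picard (fun t w ↦ A t w + h t) c ξ v) I) :
    EqOn u v I := fun d hd ↦
  have hsub := hI.uIcc_subset hc hd
  eqOn_of_eqOn_picard_Icc left_mem_uIcc (hA.integrableOn_compact_subset hsub isCompact_uIcc)
    (hh.integrableOn_compact_subset hsub isCompact_uIcc) (hu d hd) (hv d hd) (hup.mono hsub)
    (hvp.mono hsub) right_mem_uIcc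

variable [CompleteSpace E]

theorem exists_eqOn_picard_Icc (hc : c ∈ Icc a b) (hA : IntegrableOn A (Icc a b))
    (hh : IntegrableOn h (Icc a b)) (ξ : E) :
    ∃ u : ℝ → E, ContinuousOn u (Icc a b) ∧
      EqOn u (picard (fun t v ↦ A t v + h t) c ξ u) (Icc a b) := by
  obtain ⟨n, K, hK⟩ := exists_contractingWith_iterate_picardIcc hc hA hh ξ
  exact ⟨_, (ContinuousMap.continuous _).Icc_extend'.continuousOn,
    (isFixedPt_picardIcc_iff hc hA hh ξ _).1 hK.isFixedPt_fixedPoint_iterate⟩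

theorem exists_eqOn_picard {I : Set ℝ} (hI : OrdConnected I) (hc : c ∈ I)
    (hA : LocallyIntegrableOn A I) (hh : LocallyIntegrableOn h I) (ξ : E) :
    ∃ u : ℝ → E, (∀ d ∈ I, ContinuousOn u (uIcc c d)) ∧
      EqOn u (picard (fun t v ↦ A t v + h t) c ξ u) I := by
  have hA' : ∀ d ∈ I, IntegrableOn A (uIcc c d) := fun d hd ↦
    hA.integrableOn_compact_subset (hI.uIcc_subset hc hd) isCompact_uIcc
  have hh' : ∀ d ∈ I, IntegrableOn h (uIcc c d) := fun d hd ↦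
    hh.integrableOn_compact_subset (hI.uIcc_subset hc hd) isCompact_uIcc
  choose! U hUc hUp using fun d (hd : d ∈ I) ↦
    exists_eqOn_picard_Icc (left_mem_uIcc (b := d)) (hA' d hd) (hh' d hd) ξ
  have hU : ∀ d ∈ I, EqOn (fun x ↦ U x x) (U d) (uIcc c d) := by
    intro d hd y hy
    have hyI : y ∈ I := hI.uIcc_subset hc hd hy
    have hsub : uIcc c y ⊆ uIcc c d := uIcc_subset_uIcc left_mem_uIcc hy
    exact eqOn_of_eqOn_picard_Icc left_mem_uIcc (hA' y hyI) (hh' y hyI) (hUc y hyI)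
      ((hUc d hd).mono hsub) (hUp y hyI) ((hUp d hd).mono hsub) right_mem_uIcc
  refine ⟨fun x ↦ U x x, fun d hd ↦ (hUc d hd).congr (hU d hd), fun x hx ↦ ?_⟩
  rw [picard_eq_of_eqOn (hU x hx)]
  exact hUp x hx right_mem_uIcc

theorem hasAEDerivOnC_clm_comp {I : Set ℝ} {c : ℝ} {ξ : E} {u w : ℝ → E}
    (hu : ∀ x ∈ I, u x = ξ + ∫ t in c..x, w t) (hw : ∀ d ∈ I, IntervalIntegrable w volume c d)
    (L : E →L[ℝ] ℂ) : HasAEDerivOnC I (fun t ↦ L (u t)) (fun t ↦ L (w t)) := by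
  intro x hx y hy
  have hxy := (hw x hx).symm.trans (hw y hy)
  refine ⟨⟨L.integrable_comp hxy.1, L.integrable_comp hxy.2⟩, ?_⟩
  rw [L.intervalIntegral_comp_comm hxy, ← map_sub, hu x hx, hu y hy, add_sub_add_left_eq_sub,
    integral_interval_sub_left (hw y hy) (hw x hx)]

end LinearIntegralEquation

theorem HasAEDerivOnC.continuousOn_uIcc {I : Set ℝ} (hI : OrdConnected I) {f fd : ℝ → ℂ}
    (hf : HasAEDerivOnC I f fd) {x y : ℝ} (hx : x ∈ I) (hy : y ∈ I) :
    ContinuousOn f (uIcc x y) :=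
  (continuousOn_const.add (continuousOn_primitive_interval' (hf x hx y hy).1 left_mem_uIcc)).congr
    fun t ht ↦ by
      change f t = f x + ∫ s in x..t, fd s
      rw [← (hf x hx t (hI.uIcc_subset hx hy ht)).2, add_sub_cancel]

theorem HasAEDerivOnC.clm_comp {I : Set ℝ} {f fd : ℝ → ℂ} (hf : HasAEDerivOnC I f fd)
    (L : ℂ →L[ℝ] ℂ) : HasAEDerivOnC I (fun t ↦ L (f t)) (fun t ↦ L (fd t)) := by
  intro x hx y hy
  obtain ⟨hi, he⟩ := hf x hx y hy
  refine ⟨⟨L.integrable_comp hi.1, L.integrable_comp hi.2⟩, ?_⟩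
  rw [← map_sub, he, L.intervalIntegral_comp_comm hi]

theorem eqOn_picard_of_hasAEDerivOnC {I : Set ℝ} (hI : OrdConnected I) {c : ℝ} (hc : c ∈ I)
    {F : ℝ → ℂ × ℂ → ℂ × ℂ} {f fd f1 f1d : ℝ → ℂ} (hf : HasAEDerivOnC I f fd)
    (hf1 : HasAEDerivOnC I f1 f1d) (hF : ∀ᵐ t, t ∈ I → (fd t, f1d t) = F t (f t, f1 t)) :
    EqOn (fun t ↦ (f t, f1 t)) (picard F c (f c, f1 c) (fun t ↦ (f t, f1 t))) I := by
  intro x hx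
  obtain ⟨h0, h0'⟩ := hf c hc x hx
  obtain ⟨h1, h1'⟩ := hf1 c hc x hx
  have hW : IntervalIntegrable (fun t ↦ (fd t, f1d t)) volume c x :=
    ⟨h0.1.prodMk h1.1, h0.2.prodMk h1.2⟩
  have hcongr : ∫ t in c..x, F t (f t, f1 t) = ∫ t in c..x, (fd t, f1d t) := by
    refine integral_congr_ae ?_
    filter_upwards [hF] with t ht htI
    exact (ht (hI.uIcc_subset hc hx (uIoc_subset_uIcc htI))).symm
  rw [picard_apply, hcongr]
  have hfst := (ContinuousLinearMap.fst ℝ ℂ ℂ).intervalIntegral_comp_comm hW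
  have hsnd := (ContinuousLinearMap.snd ℝ ℂ ℂ).intervalIntegral_comp_comm hW
  simp only [ContinuousLinearMap.coe_fst', ContinuousLinearMap.coe_snd'] at hfst hsnd
  ext
  · rw [Prod.fst_add, ← hfst]
    exact eq_add_of_sub_eq' h0'
  · rw [Prod.snd_add, ← hsnd]
    exact eq_add_of_sub_eq' h1'

theorem MeasureTheory.LocallyIntegrableOn.smul_const {𝕜 F : Type*} [NormedField 𝕜]
    [NormedAddCommGroup F] [NormedSpace 𝕜 F] {f : ℝ → 𝕜} {s : Set ℝ}
    (hf : LocallyIntegrableOn f s) (v : F) : LocallyIntegrableOn (fun t ↦ f t • v) s :=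
  fun x hx ↦
    let ⟨U, hU, hfU⟩ := hf x hx
    ⟨U, hU, hfU.smul_const v⟩

section SturmLiouville

variable {a b : EReal} {p q r s : ℝ → ℝ} {z : ℂ} {g : ℝ → ℂ}

theorem ordConnected_EI : OrdConnected (EI a b) :=
  ⟨fun _ hx _ hy _ ht ↦ ⟨hx.1.trans_le (EReal.coe_le_coe_iff.2 ht.1),
    (EReal.coe_le_coe_iff.2 ht.2).trans_lt hy.2⟩⟩

open ContinuousLinearMap in
/-- `(f, f^[1])' = slSystem (f, f^[1]) + slForcing` is `(τ - z) f = g` solved for the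
derivatives: the first row inverts `f^[1] = p (f' + s f)`. -/
noncomputable def slSystem (p q r s : ℝ → ℝ) (z : ℂ) (t : ℝ) : ℂ × ℂ →L[ℝ] ℂ × ℂ :=
  (-s t) • (inl ℝ ℂ ℂ ∘L fst ℝ ℂ ℂ) + (1 / p t) • (inl ℝ ℂ ℂ ∘L snd ℝ ℂ ℂ) +
    q t • (inr ℝ ℂ ℂ ∘L fst ℝ ℂ ℂ) - r t • (inr ℝ ℂ ℂ ∘L (z • fst ℝ ℂ ℂ)) +
    s t • (inr ℝ ℂ ℂ ∘L snd ℝ ℂ ℂ)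

def slForcing (r : ℝ → ℝ) (g : ℝ → ℂ) (t : ℝ) : ℂ × ℂ := (0, -(r t * g t))

theorem slSystem_apply (t : ℝ) (v : ℂ × ℂ) :
    slSystem p q r s z t v =
      (-s t * v.1 + (1 / p t : ℝ) * v.2, (q t - z * r t) * v.1 + s t * v.2) := by
  ext <;> simp [slSystem]
  ring

theorem locallyIntegrableOn_slSystem (H : SLH a b p q r s) (z : ℂ) :
    LocallyIntegrableOn (slSystem p q r s z) (EI a b) := by
  open ContinuousLinearMap in
  exact (((H.s_loc.neg.smul_const (inl ℝ ℂ ℂ ∘L fst ℝ ℂ ℂ)).add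
    (H.invp_loc.smul_const (inl ℝ ℂ ℂ ∘L snd ℝ ℂ ℂ))).add
    (H.q_loc.smul_const (inr ℝ ℂ ℂ ∘L fst ℝ ℂ ℂ))).sub
    (H.r_loc.smul_const (inr ℝ ℂ ℂ ∘L (z • fst ℝ ℂ ℂ))) |>.add
    (H.s_loc.smul_const (inr ℝ ℂ ℂ ∘L snd ℝ ℂ ℂ))

theorem locallyIntegrableOn_slForcing
    (hg : LocallyIntegrableOn (fun x ↦ (r x : ℂ) * g x) (EI a b)) :
    LocallyIntegrableOn (slForcing r g) (EI a b) := by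
  have : slForcing r g = fun t ↦ (-(r t * g t)) • ((0, 1) : ℂ × ℂ) := by
    funext t; simp [slForcing]
  rw [this]
  exact hg.neg.smul_const _

theorem slSystem_eq_iff {t : ℝ} (hp : p t ≠ 0) (hr : r t ≠ 0) {f fd f1 f1d : ℝ → ℂ} :
    (f1 t = p t * (fd t + s t * f t) ∧ tauAppC q r s f f1 f1d t - z * f t = g t) ↔
      (fd t, f1d t) = slSystem p q r s z t (f t, f1 t) + slForcing r g t := by
  have hp' : (p t : ℂ) ≠ 0 := by exact_mod_cast hp
  have hr' : (r t : ℂ) ≠ 0 := by exact_mod_cast hr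
  rw [slSystem_apply, slForcing, tauAppC, Prod.ext_iff]
  simp only [Prod.fst_add, Prod.snd_add, add_zero]
  push_cast
  refine and_congr ⟨fun h ↦ ?_, fun h ↦ ?_⟩ ⟨fun h ↦ ?_, fun h ↦ ?_⟩
  · rw [h]; field_simp; ring
  · rw [h]; field_simp; ring
  · rw [← h]; field_simp; ring
  · rw [h]; field_simp; ring

theorem InDomTauC.conj {I : Set ℝ} {f fd f1 f1d : ℝ → ℂ} (hdom : InDomTauC I p s f fd f1 f1d) :
    InDomTauC I p s (fun t ↦ starRingEnd ℂ (f t)) (fun t ↦ starRingEnd ℂ (fd t))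
      (fun t ↦ starRingEnd ℂ (f1 t)) (fun t ↦ starRingEnd ℂ (f1d t)) :=
  ⟨hdom.1.clm_comp Complex.conjCLE.toContinuousLinearMap,
    by filter_upwards [hdom.2.1] with t h ht; simp [h ht],
    hdom.2.2.clm_comp Complex.conjCLE.toContinuousLinearMap⟩

theorem tauAppC_conj {f f1 f1d : ℝ → ℂ} (t : ℝ) :
    tauAppC q r s (fun t ↦ starRingEnd ℂ (f t)) (fun t ↦ starRingEnd ℂ (f1 t))
      (fun t ↦ starRingEnd ℂ (f1d t)) t = starRingEnd ℂ (tauAppC q r s f f1 f1d t) := by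
  simp [tauAppC]

theorem InDomTauC.eqOn_picard_slSystem (H : SLH a b p q r s) {c : ℝ} (hc : c ∈ EI a b)
    {f fd f1 f1d : ℝ → ℂ} (hdom : InDomTauC (EI a b) p s f fd f1 f1d)
    (heq : ∀ᵐ t, t ∈ EI a b → tauAppC q r s f f1 f1d t - z * f t = g t) :
    EqOn (fun t ↦ (f t, f1 t))
      (picard (fun t v ↦ slSystem p q r s z t v + slForcing r g t) c (f c, f1 c)
        (fun t ↦ (f t, f1 t))) (EI a b) :=
  eqOn_picard_of_hasAEDerivOnC ordConnected_EI hc hdom.1 hdom.2.2 <| by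
    filter_upwards [H.ppos, H.rpos, hdom.2.1, heq] with t hp hr hq he ht
    exact (slSystem_eq_iff (hp ht).ne' (hr ht).ne').1 ⟨hq ht, he ht⟩

theorem InDomTauC.eqOn_of_tauAppC_sub_eq (H : SLH a b p q r s)
    (hg : LocallyIntegrableOn (fun x ↦ (r x : ℂ) * g x) (EI a b)) {c : ℝ} (hc : c ∈ EI a b)
    {f fd f1 f1d f' fd' f1' f1d' : ℝ → ℂ} (hdom : InDomTauC (EI a b) p s f fd f1 f1d)
    (heq : ∀ᵐ t, t ∈ EI a b → tauAppC q r s f f1 f1d t - z * f t = g t)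
    (hdom' : InDomTauC (EI a b) p s f' fd' f1' f1d')
    (heq' : ∀ᵐ t, t ∈ EI a b → tauAppC q r s f' f1' f1d' t - z * f' t = g t)
    (h₀ : f c = f' c) (h₁ : f1 c = f1' c) :
    EqOn f f' (EI a b) ∧ EqOn f1 f1' (EI a b) := by
  have hcont : ∀ {f fd f1 f1d : ℝ → ℂ}, InDomTauC (EI a b) p s f fd f1 f1d →
      ∀ d ∈ EI a b, ContinuousOn (fun t ↦ (f t, f1 t)) (uIcc c d) := fun hdom d hd ↦
    (hdom.1.continuousOn_uIcc ordConnected_EI hc hd).prodMk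
      (hdom.2.2.continuousOn_uIcc ordConnected_EI hc hd)
  have hfix' := hdom'.eqOn_picard_slSystem H hc heq'
  rw [← h₀, ← h₁] at hfix'
  have hpair := eqOn_of_eqOn_picard ordConnected_EI hc (locallyIntegrableOn_slSystem H z)
    (locallyIntegrableOn_slForcing hg) (hcont hdom) (hcont hdom')
    (hdom.eqOn_picard_slSystem H hc heq) hfix'
  exact ⟨fun x hx ↦ congrArg Prod.fst (hpair hx), fun x hx ↦ congrArg Prod.snd (hpair hx)⟩

theorem exists_inDomTauC_tauAppC_sub_eq (H : SLH a b p q r s)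
    (hg : LocallyIntegrableOn (fun x ↦ (r x : ℂ) * g x) (EI a b)) (z : ℂ) {c : ℝ}
    (hc : c ∈ EI a b) (α β : ℂ) :
    ∃ f fd f1 f1d : ℝ → ℂ, InDomTauC (EI a b) p s f fd f1 f1d ∧
      (∀ᵐ t, t ∈ EI a b → tauAppC q r s f f1 f1d t - z * f t = g t) ∧ f c = α ∧ f1 c = β := by
  have hA := locallyIntegrableOn_slSystem H z
  have hh := locallyIntegrableOn_slForcing hg
  obtain ⟨u, hu_cont, hu⟩ := exists_eqOn_picard ordConnected_EI hc hA hh (α, β)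
  set w : ℝ → ℂ × ℂ := fun t ↦ slSystem p q r s z t (u t) + slForcing r g t
  have hw : ∀ d ∈ EI a b, IntervalIntegrable w volume c d := fun d hd ↦
    have hsub := ordConnected_EI.uIcc_subset hc hd
    (integrableOn_clm_apply_add isCompact_uIcc (hA.integrableOn_compact_subset hsub isCompact_uIcc)
      (hh.integrableOn_compact_subset hsub isCompact_uIcc) (hu_cont d hd)).intervalIntegrable
  have hsys : ∀ᵐ t, t ∈ EI a b → (u t).2 = p t * ((w t).1 + s t * (u t).1) ∧
      tauAppC q r s (fun t ↦ (u t).1) (fun t ↦ (u t).2) (fun t ↦ (w t).2) t - z * (u t).1 =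
        g t := by
    filter_upwards [H.ppos, H.rpos] with t hp hr ht
    exact (slSystem_eq_iff (f := fun t ↦ (u t).1) (fd := fun t ↦ (w t).1)
      (f1 := fun t ↦ (u t).2) (f1d := fun t ↦ (w t).2) (hp ht).ne' (hr ht).ne').2 rfl
  have hu_c : u c = (α, β) := by rw [hu hc, picard_apply₀]
  refine ⟨fun t ↦ (u t).1, fun t ↦ (w t).1, fun t ↦ (u t).2, fun t ↦ (w t).2,
    ⟨hasAEDerivOnC_clm_comp hu hw (.fst ℝ ℂ ℂ), ?_, hasAEDerivOnC_clm_comp hu hw (.snd ℝ ℂ ℂ)⟩,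
    ?_, by simp [hu_c], by simp [hu_c]⟩
  · filter_upwards [hsys] with t h ht using (h ht).1
  · filter_upwards [hsys] with t h ht using (h ht).2

end SturmLiouville

/-- Theorem 2.3 (existence and uniqueness for the initial value problem): if
`g ∈ L¹_loc((a,b); r dx)`, `z ∈ ℂ`, `c ∈ (a,b)`, and `α, β ∈ ℂ`, then there is a unique
`f ∈ 𝔇_τ` with `(τ - z) f = g` a.e. on `(a,b)`, `f(c) = α`, and `f^[1](c) = β`; if `g`,
`α`, `β`, `z` are real-valued, then `f` is real-valued. -/
theorem ivp_existence_uniqueness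
    (a b : EReal) (p q r s : ℝ → ℝ) (H : SLH a b p q r s)
    (g : ℝ → ℂ)
    (hg : LocallyIntegrableOn (fun x => (r x : ℂ) * g x) (EI a b) volume)
    (z : ℂ) (c : ℝ) (hc : c ∈ EI a b) (α β : ℂ) :
    ∃ f fd f1 f1d : ℝ → ℂ,
      InDomTauC (EI a b) p s f fd f1 f1d ∧
      (∀ᵐ t ∂(volume : Measure ℝ), t ∈ EI a b →
        tauAppC q r s f f1 f1d t - z * f t = g t) ∧
      f c = α ∧ f1 c = β ∧
      (∀ f' fd' f1' f1d' : ℝ → ℂ,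
        InDomTauC (EI a b) p s f' fd' f1' f1d' →
        (∀ᵐ t ∂(volume : Measure ℝ), t ∈ EI a b →
          tauAppC q r s f' f1' f1d' t - z * f' t = g t) →
        f' c = α → f1' c = β →
        Set.EqOn f' f (EI a b) ∧ Set.EqOn f1' f1 (EI a b)) ∧
      ((∀ x ∈ EI a b, (g x).im = 0) → z.im = 0 → α.im = 0 → β.im = 0 →
        ∀ x ∈ EI a b, (f x).im = 0) := by
  obtain ⟨f, fd, f1, f1d, hdom, heq, hfc, hf1c⟩ := exists_inDomTauC_tauAppC_sub_eq H hg z hc α β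
  have huniq : ∀ f' fd' f1' f1d' : ℝ → ℂ, InDomTauC (EI a b) p s f' fd' f1' f1d' →
      (∀ᵐ t ∂(volume : Measure ℝ), t ∈ EI a b → tauAppC q r s f' f1' f1d' t - z * f' t = g t) →
      f' c = α → f1' c = β → EqOn f' f (EI a b) ∧ EqOn f1' f1 (EI a b) :=
    fun _ _ _ _ hdom' heq' hfc' hf1c' ↦
      hdom'.eqOn_of_tauAppC_sub_eq H hg hc heq' hdom heq (hfc'.trans hfc.symm)
        (hf1c'.trans hf1c.symm)
  refine ⟨f, fd, f1, f1d, hdom, heq, hfc, hf1c, huniq, fun hg_re hz_re hα_re hβ_re x hx ↦ ?_⟩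
  have heq_conj : ∀ᵐ t ∂(volume : Measure ℝ), t ∈ EI a b →
      tauAppC q r s (fun t ↦ starRingEnd ℂ (f t)) (fun t ↦ starRingEnd ℂ (f1 t))
        (fun t ↦ starRingEnd ℂ (f1d t)) t - z * starRingEnd ℂ (f t) = g t := by
    filter_upwards [heq] with t h ht
    rw [tauAppC_conj, ← Complex.conj_eq_iff_im.2 hz_re, ← map_mul, ← map_sub, h ht,
      Complex.conj_eq_iff_im.2 (hg_re t ht)]
  have hconj := huniq _ _ _ _ hdom.conj heq_conj
    (by rw [hfc, Complex.conj_eq_iff_im.2 hα_re]) (by rw [hf1c, Complex.conj_eq_iff_im.2 hβ_re])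
  exact Complex.conj_eq_iff_im.1 (hconj.1 hx)
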